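/- arXiv:1901.10670 — 7 statements merged into one kernel-verified Lean document; each statement's English description precedes it below -/
import Mathlib

section
/- Fix k > 0 and a natural number N ≥ 1, define F_{N,k}(x) := kx·(1 − (x/(x+1/k))^{N+1}) − (N+1)·(x/(x+1/k))^{N+1} for x ≥ 0, and let m := max_{x ≥ 0} F_{N,k}(x). Then for every c with 0 < c < m there exist exactly two distinct values x > 0 satisfying F_{N,k}(x) = c. -/
/-!
Substituting `t = k x / (k x + 1)`, which maps `(0, ∞)` bijectively onto `(0, 1)`, turns
`F_{N,k}` into the polynomial `G(t) = t + t² + ⋯ + t^(N+1) - (N+1) t^(N+1)`, which vanishes at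
`0` and `1`. For `0 < s < t` one has `t^N G'(s) - s^N G'(t) > 0`, so `G'` changes sign at most
once, from `+` to `-`. Hence `G` increases up to its maximiser on `[0, 1]` and decreases after it,
and every level strictly between `0` and the maximum is attained exactly twice in `(0, 1)`.
-/

open Set

theorem Set.BijOn.encard_sep {α β : Type*} {f : α → β} {s : Set α} {t : Set β}
    (h : BijOn f s t) (q : β → Prop) : {x ∈ s | q (f x)}.encard = {y ∈ t | q y}.encard := by
  have := (h.injOn.mono (inter_subset_left (t := f ⁻¹' {y | q y}))).encard_image
  rw [image_inter_preimage, h.image_eq] at this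
  exact this.symm

section Unimodal

variable {f f' : ℝ → ℝ} {a b p u v : ℝ}

theorem strictMonoOn_Icc_of_hasDerivAt_pos (hf : ContinuousOn f (Icc a b))
    (hf' : ∀ x ∈ Ioo a b, HasDerivAt f (f' x) x) (hu : a ≤ u) (hv : v ≤ b)
    (hpos : ∀ x ∈ Ioo u v, 0 < f' x) : StrictMonoOn f (Icc u v) :=
  strictMonoOn_of_hasDerivWithinAt_pos (convex_Icc u v) (hf.mono (Icc_subset_Icc hu hv))
    (fun x hx => by
      rw [interior_Icc] at hx ⊢
      exact (hf' x ⟨hu.trans_lt hx.1, hx.2.trans_le hv⟩).hasDerivWithinAt)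
    (by simpa only [interior_Icc] using hpos)

theorem strictAntiOn_Icc_of_hasDerivAt_neg (hf : ContinuousOn f (Icc a b))
    (hf' : ∀ x ∈ Ioo a b, HasDerivAt f (f' x) x) (hu : a ≤ u) (hv : v ≤ b)
    (hneg : ∀ x ∈ Ioo u v, f' x < 0) : StrictAntiOn f (Icc u v) :=
  strictAntiOn_of_hasDerivWithinAt_neg (convex_Icc u v) (hf.mono (Icc_subset_Icc hu hv))
    (fun x hx => by
      rw [interior_Icc] at hx ⊢
      exact (hf' x ⟨hu.trans_lt hx.1, hx.2.trans_le hv⟩).hasDerivWithinAt)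
    (by simpa only [interior_Icc] using hneg)

theorem strictMonoOn_Icc_of_isMaxOn (hf : ContinuousOn f (Icc a b))
    (hf' : ∀ x ∈ Ioo a b, HasDerivAt f (f' x) x)
    (hcross : ∀ s t, a < s → s < t → t < b → f' s ≤ 0 → f' t < 0)
    (hp : p ∈ Icc a b) (hmax : IsMaxOn f (Icc a b) p) : StrictMonoOn f (Icc a p) := by
  refine strictMonoOn_Icc_of_hasDerivAt_pos hf hf' le_rfl hp.2 fun u hu => ?_
  by_contra! hu'
  have hanti : StrictAntiOn f (Icc u b) :=
    strictAntiOn_Icc_of_hasDerivAt_neg hf hf' hu.1.le le_rfl fun v hv =>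
      hcross u v hu.1 hv.1 hv.2 hu'
  exact (hanti ⟨le_rfl, hu.2.le.trans hp.2⟩ ⟨hu.2.le, hp.2⟩ hu.2).not_ge
    (hmax ⟨hu.1.le, hu.2.le.trans hp.2⟩)

theorem strictAntiOn_Icc_of_isMaxOn (hf : ContinuousOn f (Icc a b))
    (hf' : ∀ x ∈ Ioo a b, HasDerivAt f (f' x) x)
    (hcross : ∀ s t, a < s → s < t → t < b → f' s ≤ 0 → f' t < 0)
    (hp : p ∈ Icc a b) (hmax : IsMaxOn f (Icc a b) p) : StrictAntiOn f (Icc p b) := by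
  refine strictAntiOn_Icc_of_hasDerivAt_neg hf hf' hp.1 le_rfl fun u hu => ?_
  by_contra! hu'
  have hmono : StrictMonoOn f (Icc a u) :=
    strictMonoOn_Icc_of_hasDerivAt_pos hf hf' le_rfl hu.2.le fun v hv => by
      by_contra! hv'
      exact (hcross v u hv.1 hv.2 hu.2 hv').not_ge hu'
  exact (hmono ⟨hp.1, hu.1.le⟩ ⟨hp.1.trans hu.1.le, le_rfl⟩ hu.1).not_ge
    (hmax ⟨hp.1.trans hu.1.le, hu.2.le⟩)

end Unimodal

theorem encard_setOf_eq_two_of_unimodal {f : ℝ → ℝ} {a b p c : ℝ} (hp : p ∈ Icc a b)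
    (hf : ContinuousOn f (Icc a b)) (hmono : StrictMonoOn f (Icc a p))
    (hanti : StrictAntiOn f (Icc p b)) (ha : f a < c) (hb : f b < c) (hc : c < f p) :
    {x ∈ Ioo a b | f x = c}.encard = 2 := by
  obtain ⟨s₁, hs₁, hfs₁⟩ := intermediate_value_Icc hp.1 (hf.mono (Icc_subset_Icc le_rfl hp.2))
    ⟨ha.le, hc.le⟩
  obtain ⟨s₂, hs₂, hfs₂⟩ := intermediate_value_Icc' hp.2 (hf.mono (Icc_subset_Icc hp.1 le_rfl))
    ⟨hb.le, hc.le⟩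
  have has₁ : a < s₁ := hs₁.1.lt_of_ne (by rintro rfl; exact ha.ne hfs₁)
  have hs₁p : s₁ < p := hs₁.2.lt_of_ne (by rintro rfl; exact hc.ne' hfs₁)
  have hps₂ : p < s₂ := hs₂.1.lt_of_ne (by rintro rfl; exact hc.ne' hfs₂)
  have hs₂b : s₂ < b := hs₂.2.lt_of_ne (by rintro rfl; exact hb.ne hfs₂)
  suffices {x ∈ Ioo a b | f x = c} = {s₁, s₂} by
    rw [this, encard_pair (hs₁p.trans hps₂).ne]
  ext x
  simp only [mem_insert_iff, mem_singleton_iff]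
  constructor
  · rintro ⟨hx, hfx⟩
    rcases le_total x p with hxp | hpx
    · exact .inl (hmono.injOn ⟨hx.1.le, hxp⟩ hs₁ (hfx.trans hfs₁.symm))
    · exact .inr (hanti.injOn ⟨hpx, hx.2.le⟩ hs₂ (hfx.trans hfs₂.symm))
  · rintro (rfl | rfl)
    · exact ⟨⟨has₁, hs₁p.trans_le hp.2⟩, hfs₁⟩
    · exact ⟨⟨hp.1.trans_lt hps₂, hs₂b⟩, hfs₂⟩

theorem pow_mul_pow_le_pow_mul_pow {R : Type*} [CommSemiring R] [PartialOrder R] [IsOrderedRing R]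
    {s t : R} (hs : 0 ≤ s) (hst : s ≤ t) {i m : ℕ} (him : i ≤ m) :
    t ^ i * s ^ m ≤ s ^ i * t ^ m := by
  obtain ⟨d, rfl⟩ := Nat.exists_eq_add_of_le him
  calc t ^ i * s ^ (i + d) = s ^ i * t ^ i * s ^ d := by ring
    _ ≤ s ^ i * t ^ i * t ^ d := by
      have ht : 0 ≤ t := hs.trans hst
      gcongr
    _ = s ^ i * t ^ (i + d) := by ring

noncomputable def equilibriumPoly (N : ℕ) (t : ℝ) : ℝ :=
  ∑ i ∈ Finset.range (N + 1), t ^ (i + 1) - (N + 1) * t ^ (N + 1)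

noncomputable def equilibriumPoly' (N : ℕ) (t : ℝ) : ℝ :=
  ∑ i ∈ Finset.range (N + 1), (i + 1) * t ^ i - (N + 1) ^ 2 * t ^ N

theorem hasDerivAt_equilibriumPoly (N : ℕ) (t : ℝ) :
    HasDerivAt (equilibriumPoly N) (equilibriumPoly' N t) t := by
  have hsum := HasDerivAt.fun_sum (u := Finset.range (N + 1)) fun i _ =>
    hasDerivAt_pow (i + 1) t
  have hlast := (hasDerivAt_pow (N + 1) t).const_mul ((N : ℝ) + 1)
  refine (hsum.fun_sub hlast).congr_deriv ?_
  simp only [equilibriumPoly', Nat.add_sub_cancel]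
  push_cast
  ring

theorem continuous_equilibriumPoly (N : ℕ) : Continuous (equilibriumPoly N) :=
  continuous_iff_continuousAt.2 fun t => (hasDerivAt_equilibriumPoly N t).continuousAt

@[simp] theorem equilibriumPoly_zero (N : ℕ) : equilibriumPoly N 0 = 0 := by
  simp [equilibriumPoly]

@[simp] theorem equilibriumPoly_one (N : ℕ) : equilibriumPoly N 1 = 0 := by
  simp [equilibriumPoly]

theorem equilibriumPoly'_neg_of_nonpos {N : ℕ} (hN : 1 ≤ N) {s t : ℝ} (hs : 0 < s) (hst : s < t)
    (h : equilibriumPoly' N s ≤ 0) : equilibriumPoly' N t < 0 := by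
  have hexpand : t ^ N * equilibriumPoly' N s - s ^ N * equilibriumPoly' N t =
      ∑ i ∈ Finset.range (N + 1), (i + 1) * (s ^ i * t ^ N - t ^ i * s ^ N) :=
    calc t ^ N * equilibriumPoly' N s - s ^ N * equilibriumPoly' N t
        = t ^ N * ∑ i ∈ Finset.range (N + 1), (i + 1) * s ^ i
          - s ^ N * ∑ i ∈ Finset.range (N + 1), (i + 1) * t ^ i := by
          simp only [equilibriumPoly']
          ring
      _ = _ := by
        rw [Finset.mul_sum, Finset.mul_sum, ← Finset.sum_sub_distrib]
        exact Finset.sum_congr rfl fun i _ => by ring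
  have hcross : 0 < t ^ N * equilibriumPoly' N s - s ^ N * equilibriumPoly' N t := by
    rw [hexpand]
    refine Finset.sum_pos' (fun i hi => mul_nonneg (by positivity) (sub_nonneg.2 ?_))
      ⟨0, by simp, ?_⟩
    · exact pow_mul_pow_le_pow_mul_pow hs.le hst.le (Finset.mem_range_succ_iff.1 hi)
    · simpa using pow_lt_pow_left₀ hst hs.le (by omega : N ≠ 0)
  have hneg : s ^ N * equilibriumPoly' N t < 0 := by
    nlinarith [mul_nonpos_of_nonneg_of_nonpos (pow_pos (hs.trans hst) N).le h]
  exact neg_of_mul_neg_right hneg (pow_pos hs N).le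

theorem encard_setOf_equilibriumPoly_eq_two {N : ℕ} (hN : 1 ≤ N) {c t₀ : ℝ} (hc : 0 < c)
    (ht₀ : t₀ ∈ Icc 0 1) (hct₀ : c < equilibriumPoly N t₀) :
    {t ∈ Ioo 0 1 | equilibriumPoly N t = c}.encard = 2 := by
  have hcont := (continuous_equilibriumPoly N).continuousOn (s := Icc 0 1)
  have hderiv : ∀ t ∈ Ioo (0 : ℝ) 1, HasDerivAt (equilibriumPoly N) (equilibriumPoly' N t) t :=
    fun t _ => hasDerivAt_equilibriumPoly N t
  have hcross : ∀ s t : ℝ, 0 < s → s < t → t < 1 →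
      equilibriumPoly' N s ≤ 0 → equilibriumPoly' N t < 0 :=
    fun _ _ hs hst _ => equilibriumPoly'_neg_of_nonpos hN hs hst
  obtain ⟨p, hp, hmax⟩ := isCompact_Icc.exists_isMaxOn (nonempty_Icc.2 zero_le_one) hcont
  exact encard_setOf_eq_two_of_unimodal hp hcont
    (strictMonoOn_Icc_of_isMaxOn hcont hderiv hcross hp hmax)
    (strictAntiOn_Icc_of_isMaxOn hcont hderiv hcross hp hmax)
    (by simpa using hc) (by simpa using hc) (hct₀.trans_le (hmax ht₀))

theorem bijOn_mul_div_mul_add_one {k : ℝ} (hk : 0 < k) :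
    BijOn (fun x => k * x / (k * x + 1)) (Ioi 0) (Ioo 0 1) := by
  refine ⟨fun x hx => ?_, fun x hx y hy hxy => ?_, fun t ht => ?_⟩
  · have : 0 < k * x := mul_pos hk hx
    exact ⟨by positivity, (div_lt_one (by positivity)).2 (by linarith)⟩
  · have hx' : 0 < k * x + 1 := by have := mul_pos hk (mem_Ioi.1 hx); linarith
    have hy' : 0 < k * y + 1 := by have := mul_pos hk (mem_Ioi.1 hy); linarith
    rw [div_eq_div_iff hx'.ne' hy'.ne'] at hxy
    exact mul_left_cancel₀ hk.ne' (by linarith)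
  · have h1t : 0 < 1 - t := by linarith [ht.2]
    refine ⟨t / (k * (1 - t)), div_pos ht.1 (mul_pos hk h1t), ?_⟩
    field_simp
    ring

theorem silicosis_eq_equilibriumPoly {k x : ℝ} (hk : k ≠ 0) (hx : k * x + 1 ≠ 0) (N : ℕ) :
    k * x * (1 - (x / (x + 1 / k)) ^ (N + 1)) - (N + 1) * (x / (x + 1 / k)) ^ (N + 1) =
      equilibriumPoly N (k * x / (k * x + 1)) := by
  set t := k * x / (k * x + 1) with ht
  have hxt : x / (x + 1 / k) = t := by
    rw [ht]
    field_simp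
  have hkxt : k * x * (1 - t) = t := by
    rw [ht]
    field_simp
    ring
  have hsum :
      ∑ i ∈ Finset.range (N + 1), t ^ (i + 1) = t * ∑ i ∈ Finset.range (N + 1), t ^ i := by
    rw [Finset.mul_sum]
    exact Finset.sum_congr rfl fun i _ => pow_succ' t i
  rw [hxt, equilibriumPoly, hsum]
  linear_combination (-(k * x)) * mul_neg_geom_sum t (N + 1) +
    (∑ i ∈ Finset.range (N + 1), t ^ i) * hkxt

/-- For `k > 0`, `N ≥ 1`, with `F_{N,k}` as in the silicosis model and
`m = max_{x ≥ 0} F_{N,k}(x)`, for every `0 < c < m` there exist exactly two distinct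
positive solutions of `F_{N,k}(x) = c`. -/
theorem silicosis_exactly_two_equilibria (k : ℝ) (hk : 0 < k) (N : ℕ) (hN : 1 ≤ N)
    (F : ℝ → ℝ)
    (hF : ∀ x : ℝ, F x =
      k * x * (1 - (x / (x + 1 / k)) ^ (N + 1)) - (N + 1) * (x / (x + 1 / k)) ^ (N + 1))
    (m : ℝ) (hm : IsGreatest (F '' Set.Ici 0) m) :
    ∀ c : ℝ, 0 < c → c < m →
      ∃ x₁ x₂ : ℝ, 0 < x₁ ∧ 0 < x₂ ∧ x₁ ≠ x₂ ∧ F x₁ = c ∧ F x₂ = c ∧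
        ∀ x : ℝ, 0 < x → F x = c → x = x₁ ∨ x = x₂ := by
  intro c hc hcm
  obtain ⟨x₀, hx₀, rfl⟩ := hm.1
  have hkx : ∀ x : ℝ, 0 ≤ x → 0 ≤ k * x := fun x hx => mul_nonneg hk.le hx
  have hFG : ∀ x, 0 ≤ x → F x = equilibriumPoly N (k * x / (k * x + 1)) := fun x hx =>
    (hF x).trans (silicosis_eq_equilibriumPoly hk.ne' (by linarith [hkx x hx]) N)
  have ht₀ : k * x₀ / (k * x₀ + 1) ∈ Icc (0 : ℝ) 1 := by
    have := hkx x₀ hx₀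
    exact ⟨by positivity, div_le_one_of_le₀ (by linarith) (by positivity)⟩
  have hsol : {x ∈ Ioi 0 | F x = c}.encard = 2 := by
    calc {x ∈ Ioi 0 | F x = c}.encard
        = {x ∈ Ioi 0 | equilibriumPoly N (k * x / (k * x + 1)) = c}.encard := by
          congr 1
          ext x
          exact and_congr_right fun hx => by rw [hFG x (le_of_lt hx)]
      _ = {t ∈ Ioo 0 1 | equilibriumPoly N t = c}.encard :=
          (bijOn_mul_div_mul_add_one hk).encard_sep (equilibriumPoly N · = c)
      _ = 2 := encard_setOf_equilibriumPoly_eq_two hN hc ht₀ (hFG x₀ hx₀ ▸ hcm)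
  obtain ⟨x₁, x₂, hne, hset⟩ := encard_eq_two.1 hsol
  have h₁ : x₁ ∈ {x ∈ Ioi 0 | F x = c} := hset ▸ mem_insert _ _
  have h₂ : x₂ ∈ {x ∈ Ioi 0 | F x = c} := hset ▸ mem_insert_of_mem _ rfl
  exact ⟨x₁, x₂, h₁.1, h₂.1, hne, h₁.2, h₂.2, fun x hx hFx =>
    (hset ▸ ⟨hx, hFx⟩ : x ∈ ({x₁, x₂} : Set ℝ))⟩
end

section
/- For every natural number N ≥ 1, the polynomial p_N(y) := 1 − (N+1)²·y^N + N(2N+3)·y^{N+1} − N(N+1)·y^{N+2} has exactly one zero in the open interval (0,1). -/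
open Finset

private lemma geomI (N : ℕ) (y : ℝ) :
    (1 - y)^2 * (∑ j ∈ Finset.range N, ((j:ℝ)+1) * y^j)
      = 1 - ((N:ℝ)+1) * y^N + (N:ℝ) * y^(N+1) := by
  induction N with
  | zero => simp
  | succ n ih =>
    rw [Finset.sum_range_succ, mul_add]
    push_cast
    rw [ih]
    ring

private lemma factorI (N : ℕ) (y : ℝ) :
    1 - ((N : ℝ) + 1) ^ 2 * y ^ N + (N : ℝ) * (2 * N + 3) * y ^ (N + 1)
        - (N : ℝ) * ((N : ℝ) + 1) * y ^ (N + 2)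
      = (1 - y)^2 * ((∑ j ∈ Finset.range N, ((j:ℝ)+1) * y^j) - (N:ℝ)*((N:ℝ)+1)*y^N) := by
  have h1 := geomI N y
  linear_combination -h1

private lemma stepI (N : ℕ) (hN : 1 ≤ N) {a b : ℝ} (ha : 0 < a) (hab : a < b)
    (hga : (∑ j ∈ Finset.range N, ((j:ℝ)+1) * a^j) = (N:ℝ)*((N:ℝ)+1)*a^N) :
    (∑ j ∈ Finset.range N, ((j:ℝ)+1) * b^j) < (N:ℝ)*((N:ℝ)+1)*b^N := by
  have hb : 0 < b := lt_trans ha hab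
  have haN : (0:ℝ) < a^N := pow_pos ha N
  have hsum : a^N * (∑ j ∈ Finset.range N, ((j:ℝ)+1) * b^j)
      < b^N * (∑ j ∈ Finset.range N, ((j:ℝ)+1) * a^j) := by
    rw [Finset.mul_sum, Finset.mul_sum]
    apply Finset.sum_lt_sum_of_nonempty (Finset.nonempty_range_iff.2 (by omega))
    intro j hj
    have hjN : j < N := Finset.mem_range.1 hj
    have h1 : a^(N-j) < b^(N-j) := pow_lt_pow_left₀ hab ha.le (by omega)
    have h2 : a^(N-j) * (a^j*b^j) < b^(N-j) * (a^j*b^j) :=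
      mul_lt_mul_of_pos_right h1 (by positivity)
    have hA : a^(N-j)*a^j = a^N := by rw [← pow_add]; congr 1; omega
    have hB : b^(N-j)*b^j = b^N := by rw [← pow_add]; congr 1; omega
    have key : a^N * b^j < b^N * a^j := by
      calc a^N * b^j = a^(N-j)*(a^j*b^j) := by rw [← hA]; ring
        _ < b^(N-j)*(a^j*b^j) := h2
        _ = b^N * a^j := by rw [← hB]; ring
    have hj1 : (0:ℝ) < (j:ℝ)+1 := by positivity
    calc a^N * (((j:ℝ)+1)*b^j) = ((j:ℝ)+1)*(a^N*b^j) := by ring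
      _ < ((j:ℝ)+1)*(b^N*a^j) := mul_lt_mul_of_pos_left key hj1
      _ = b^N*(((j:ℝ)+1)*a^j) := by ring
  rw [hga, show (b:ℝ)^N*((N:ℝ)*((N:ℝ)+1)*a^N) = a^N*((N:ℝ)*((N:ℝ)+1)*b^N) from by ring]
    at hsum
  exact lt_of_mul_lt_mul_left hsum haN.le

/-- For every `N ≥ 1`, the polynomial
`p_N(y) = 1 − (N+1)²·y^N + N·(2N+3)·y^(N+1) − N·(N+1)·y^(N+2)` has exactly one zero in
the open interval `(0,1)`. -/
theorem silicosis_polynomial_unique_zero (N : ℕ) (hN : 1 ≤ N) :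
    ∃! y : ℝ, y ∈ Set.Ioo (0 : ℝ) 1 ∧
      1 - ((N : ℝ) + 1) ^ 2 * y ^ N + (N : ℝ) * (2 * N + 3) * y ^ (N + 1)
        - (N : ℝ) * ((N : ℝ) + 1) * y ^ (N + 2) = 0 := by
  set g : ℝ → ℝ := fun y =>
    (∑ j ∈ Finset.range N, ((j:ℝ)+1) * y^j) - (N:ℝ)*((N:ℝ)+1)*y^N with hg
  -- g zero iff p zero on (0,1)
  have hpg : ∀ y : ℝ, y ∈ Set.Ioo (0:ℝ) 1 →
      ((1 - ((N : ℝ) + 1) ^ 2 * y ^ N + (N : ℝ) * (2 * N + 3) * y ^ (N + 1)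
        - (N : ℝ) * ((N : ℝ) + 1) * y ^ (N + 2) = 0) ↔ g y = 0) := by
    intro y hy
    rw [factorI N y]
    have h1 : (1 - y)^2 ≠ 0 := pow_ne_zero 2 (sub_ne_zero_of_ne hy.2.ne')
    simp [hg, mul_eq_zero, h1]
  -- at most one zero
  have huniq : ∀ a b : ℝ, 0 < a → a < b → g a = 0 → g b < 0 := by
    intro a b ha hab hga
    have : (∑ j ∈ Finset.range N, ((j:ℝ)+1) * a^j) = (N:ℝ)*((N:ℝ)+1)*a^N := by
      have := hga; simp [hg] at this; linarith [this]
    have := stepI N hN ha hab this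
    simp only [hg]
    linarith
  -- continuity
  have hcont : Continuous g := by
    apply Continuous.sub
    · exact continuous_finset_sum _ (fun j _ => by continuity)
    · continuity
  -- g 0 = 1
  have hg0 : g 0 = 1 := by
    obtain ⟨M, rfl⟩ : ∃ M, N = M + 1 := ⟨N - 1, by omega⟩
    simp [hg, Finset.sum_range_succ']
  -- g 1 < 0
  have hg1 : g 1 < 0 := by
    have hb : (∑ j ∈ Finset.range N, ((j:ℝ)+1) * (1:ℝ)^j) ≤ (N:ℝ)*(N:ℝ) := by
      calc (∑ j ∈ Finset.range N, ((j:ℝ)+1) * (1:ℝ)^j)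
          ≤ ∑ j ∈ Finset.range N, (N:ℝ) := by
            apply Finset.sum_le_sum
            intro j hj
            have := Finset.mem_range.1 hj
            have : ((j:ℝ)+1) ≤ (N:ℝ) := by exact_mod_cast Nat.succ_le_of_lt this
            simpa using this
        _ = (N:ℝ)*(N:ℝ) := by simp [mul_comm]
    have hNpos : (0:ℝ) < N := by exact_mod_cast hN
    simp only [hg]
    have : (N:ℝ)*(N:ℝ) < (N:ℝ)*((N:ℝ)+1)*(1:ℝ)^N := by
      simp; nlinarith
    linarith
  -- existence via IVT
  have hivt : (0:ℝ) ∈ g '' Set.Ioo (0:ℝ) 1 := by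
    apply intermediate_value_Ioo' (le_of_lt one_pos) hcont.continuousOn
    rw [hg0]
    exact ⟨hg1, one_pos⟩
  obtain ⟨c, hc, hgc⟩ := hivt
  refine ⟨c, ⟨hc, (hpg c hc).2 hgc⟩, ?_⟩
  intro y ⟨hy, hpy⟩
  have hgy : g y = 0 := (hpg y hy).1 hpy
  by_contra hne
  rcases lt_or_gt_of_ne hne with h | h
  · have := huniq y c hy.1 h hgy
    linarith [this, hgc.ge]
  · have := huniq c y hc.1 h hgc
    linarith
end

section
/- Let x > 0 and let d_1, …, d_n be positive real numbers. Then 1 − (1/x)·∑_{i=1}^n (i·d_i − x)·∏_{j=1}^i x/(x+d_j) = (n+1)·x^n / ∏_{j=1}^n (x+d_j). -/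
/-!
Writing `P i = ∏_{j ≤ i} x / (x + d j)`, so that `P i = P (i - 1) · x / (x + d i)`, one checks
`(i + 1) P i − i P (i − 1) = −(1/x) (i d i − x) P i`. Hence the left-hand side telescopes to
`(n + 1) P n`, and `P n = x ^ n / ∏_{j ≤ n} (x + d j)`.
-/

open Finset

variable {K : Type*} [Field K]

theorem prod_Icc_div_eq_pow_div (x : K) (d : ℕ → K) (n : ℕ) :
    ∏ j ∈ Icc 1 n, x / (x + d j) = x ^ n / ∏ j ∈ Icc 1 n, (x + d j) := by
  rw [prod_div_distrib, prod_const, Nat.card_Icc, Nat.add_sub_cancel]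

theorem one_sub_inv_mul_sum_eq_succ_mul_prod {x : K} (hx : x ≠ 0) (d : ℕ → K) (n : ℕ)
    (hd : ∀ j ∈ Icc 1 n, x + d j ≠ 0) :
    1 - (1 / x) * ∑ i ∈ Icc 1 n, (((i : K) * d i - x) * ∏ j ∈ Icc 1 i, x / (x + d j)) =
      ((n : K) + 1) * ∏ j ∈ Icc 1 n, x / (x + d j) := by
  induction n with
  | zero => simp
  | succ n ih =>
    have hd_succ : x + d (n + 1) ≠ 0 := hd (n + 1) (by simp)
    have hd_le : ∀ j ∈ Icc 1 n, x + d j ≠ 0 := fun j hj =>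
      hd j (Icc_subset_Icc_right n.le_succ hj)
    rw [sum_Icc_succ_top (by omega), prod_Icc_succ_top (by omega), mul_add, ← sub_sub,
      ih hd_le]
    push_cast
    field_simp
    ring

/-- Closed form for the partial sums: for `x > 0` and positive `d_1, …, d_n`,
`1 − (1/x)·∑_{i=1}^n (i·d_i − x)·∏_{j=1}^i x/(x+d_j) = (n+1)·x^n / ∏_{j=1}^n (x+d_j)`. -/
theorem silicosis_partial_sum_identity (x : ℝ) (hx : 0 < x) (n : ℕ) (d : ℕ → ℝ)
    (hd : ∀ i ∈ Finset.Icc 1 n, 0 < d i) :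
    1 - (1 / x) * ∑ i ∈ Finset.Icc 1 n,
        (((i : ℝ) * d i - x) * ∏ j ∈ Finset.Icc 1 i, x / (x + d j)) =
      ((n : ℝ) + 1) * x ^ n / ∏ j ∈ Finset.Icc 1 n, (x + d j) := by
  rw [one_sub_inv_mul_sum_eq_succ_mul_prod hx.ne' d n fun j hj => (add_pos hx (hd j hj)).ne',
    prod_Icc_div_eq_pow_div, mul_div_assoc]
end

section
/- Let (d_i)_{i≥1} be a sequence of positive reals with z := inf_{i≥1} d_i > 0. Then for every x ≥ 0 the series ∑_{i=1}^∞ (i·d_i − x)·∏_{j=1}^i x/(x+d_j) converges and its sum equals x. -/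
/-!
With `Q n = ∏_{j ≤ n} x / (x + d j)`, the recursion `x * Q n = (x + d (n + 1)) * Q (n + 1)` turns
the `n`-th term into `a n - a (n + 1)` for `a n = x * (n + 1) * Q n`, and `a 0 = x`. Since
`d j ≥ z := inf d`, `Q n ≤ (x / (x + z)) ^ n` decays geometrically, so `a` is summable and the
series telescopes to `a 0`.
-/

open Finset

theorem Summable.hasSum_sub_succ {G : Type*} [AddCommGroup G] [TopologicalSpace G]
    [IsTopologicalAddGroup G] {a : ℕ → G} (ha : Summable a) :
    HasSum (fun n ↦ a n - a (n + 1)) (a 0) := by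
  have hshift : HasSum (fun n ↦ a (n + 1)) (∑' n, a n - a 0) := by
    simpa using (hasSum_nat_add_iff' 1).2 ha.hasSum
  simpa using ha.hasSum.sub hshift

theorem summable_succ_mul_geometric {r : ℝ} (h₀ : 0 ≤ r) (h₁ : r < 1) :
    Summable fun n : ℕ ↦ ((n : ℝ) + 1) * r ^ n := by
  have hr : ‖r‖ < 1 := by rwa [Real.norm_of_nonneg h₀]
  simpa [add_mul] using
    (hasSum_coe_mul_geometric_of_norm_lt_one hr).summable.add (summable_geometric_of_lt_one h₀ h₁)

section

variable (d : ℕ → ℝ) (x : ℝ)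

noncomputable def ratioProd (n : ℕ) : ℝ := ∏ j ∈ Icc 1 n, x / (x + d j)

theorem ratioProd_zero : ratioProd d x 0 = 1 := by simp [ratioProd]

theorem ratioProd_succ (n : ℕ) :
    ratioProd d x (n + 1) = ratioProd d x n * (x / (x + d (n + 1))) :=
  prod_Icc_succ_top (by omega) _

variable {d x}

theorem ratioProd_nonneg (hx : 0 ≤ x) (hd : ∀ j, 1 ≤ j → 0 ≤ d j) (n : ℕ) :
    0 ≤ ratioProd d x n :=
  prod_nonneg fun j hj ↦ div_nonneg hx (add_nonneg hx (hd j (mem_Icc.1 hj).1))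

theorem ratioProd_le_pow {z : ℝ} (hx : 0 ≤ x) (hz : 0 < x + z) (hzd : ∀ j, 1 ≤ j → z ≤ d j)
    (n : ℕ) : ratioProd d x n ≤ (x / (x + z)) ^ n := by
  have hpos (j) (hj : 1 ≤ j) : 0 < x + d j := by linarith [hzd j hj]
  calc ratioProd d x n ≤ ∏ _j ∈ Icc 1 n, x / (x + z) :=
        prod_le_prod (fun j hj ↦ div_nonneg hx (hpos j (mem_Icc.1 hj).1).le) fun j hj ↦
          div_le_div_of_nonneg_left hx hz (by linarith [hzd j (mem_Icc.1 hj).1])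
    _ = (x / (x + z)) ^ n := by rw [prod_const, Nat.card_Icc, Nat.add_sub_cancel]

theorem summable_succ_mul_ratioProd {z : ℝ} (hx : 0 ≤ x) (hz : 0 < z)
    (hzd : ∀ j, 1 ≤ j → z ≤ d j) :
    Summable fun n : ℕ ↦ x * ((n : ℝ) + 1) * ratioProd d x n := by
  have hxz : 0 < x + z := by linarith
  have hr₀ : 0 ≤ x / (x + z) := div_nonneg hx hxz.le
  have hr₁ : x / (x + z) < 1 := (div_lt_one hxz).2 (by linarith)
  refine ((summable_succ_mul_geometric hr₀ hr₁).mul_left x).of_nonneg_of_le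
    (fun n ↦ mul_nonneg (by positivity) (ratioProd_nonneg hx (fun j hj ↦ by linarith [hzd j hj]) n))
    fun n ↦ ?_
  rw [← mul_assoc]
  exact mul_le_mul_of_nonneg_left (ratioProd_le_pow hx hxz hzd n) (by positivity)

theorem succ_mul_sub_mul_ratioProd_succ (n : ℕ) (hn : x + d (n + 1) ≠ 0) :
    (((n + 1 : ℕ) : ℝ) * d (n + 1) - x) * ratioProd d x (n + 1) =
      x * ((n : ℝ) + 1) * ratioProd d x n -
        x * (((n + 1 : ℕ) : ℝ) + 1) * ratioProd d x (n + 1) := by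
  have hstep : (x + d (n + 1)) * ratioProd d x (n + 1) = x * ratioProd d x n := by
    rw [ratioProd_succ]; field_simp
  push_cast
  linear_combination (↑n + 1) * hstep

end

/-- If `(d_i)_{i≥1}` are positive reals with positive infimum, then for every `x ≥ 0` the
series `∑_{i=1}^∞ (i·d_i − x)·∏_{j=1}^i x/(x+d_j)` converges with sum `x`. -/
theorem silicosis_series_sum_x (d : ℕ → ℝ) (hd : ∀ i : ℕ, 1 ≤ i → 0 < d i)
    (hz : 0 < ⨅ i : ℕ, d (i + 1)) (x : ℝ) (hx : 0 ≤ x) :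
    HasSum (fun i : ℕ =>
        (((i + 1 : ℕ) : ℝ) * d (i + 1) - x) * ∏ j ∈ Finset.Icc 1 (i + 1), x / (x + d j))
      x := by
  have hzd : ∀ j, 1 ≤ j → ⨅ i : ℕ, d (i + 1) ≤ d j := by
    intro j hj
    obtain ⟨k, rfl⟩ := Nat.exists_eq_add_of_le' hj
    exact ciInf_le ⟨0, by rintro _ ⟨i, rfl⟩; exact (hd (i + 1) (by omega)).le⟩ k
  have htelescope := (summable_succ_mul_ratioProd hx hz hzd).hasSum_sub_succ
  simp only [CharP.cast_eq_zero, zero_add, mul_one, ratioProd_zero] at htelescope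
  exact htelescope.congr_fun fun n ↦
    succ_mul_sub_mul_ratioProd_succ n (add_pos_of_nonneg_of_pos hx (hd (n + 1) (by omega))).ne'
end

section
/- Let (d_i)_{i≥1} be a sequence of positive reals with z := inf_{i≥1} d_i > 0. Then for every x ≥ 0 the series ∑_{i=1}^∞ d_i·∏_{j=1}^i x/(x+d_j) converges and its sum equals x. -/
/-!
Write `P n = ∏_{j=1}^n x/(x+d_j)`. Since `P (n+1) (x + d_{n+1}) = x P n`, the `n`-th term
`d_{n+1} P (n+1)` equals `x (P n - P (n+1))`, so the series telescopes to `x (P 0 - lim P) = x`: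
the factors are at most `x/(x+z) < 1` with `z = inf d_j`, whence `P n ≤ (x/(x+z))^n → 0`.
-/

open Filter Topology Finset

theorem hasSum_sub_succ_of_antitone {f : ℕ → ℝ} {l : ℝ} (hf : Antitone f)
    (hl : Tendsto f atTop (𝓝 l)) : HasSum (fun n => f n - f (n + 1)) (f 0 - l) := by
  rw [hasSum_iff_tendsto_nat_of_nonneg fun n => sub_nonneg.2 (hf n.le_succ)]
  simp_rw [sum_range_sub']
  exact tendsto_const_nhds.sub hl

noncomputable def survivalProduct (d : ℕ → ℝ) (x : ℝ) (n : ℕ) : ℝ :=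
  ∏ j ∈ Icc 1 n, x / (x + d j)

namespace survivalProduct

variable {d : ℕ → ℝ} {x : ℝ}

@[simp]
theorem zero : survivalProduct d x 0 = 1 := by
  simp [survivalProduct]

theorem succ (n : ℕ) :
    survivalProduct d x (n + 1) = survivalProduct d x n * (x / (x + d (n + 1))) :=
  prod_Icc_succ_top (Nat.le_add_left 1 n) _

theorem mul_succ_eq_sub {n : ℕ} (hn : x + d (n + 1) ≠ 0) :
    d (n + 1) * survivalProduct d x (n + 1)
      = x * (survivalProduct d x n - survivalProduct d x (n + 1)) := by
  rw [succ]
  field_simp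
  ring

theorem factor_mem_Icc (hx : 0 ≤ x) {j : ℕ} (hj : 0 ≤ d j) : x / (x + d j) ∈ Set.Icc 0 1 :=
  ⟨div_nonneg hx (add_nonneg hx hj), div_le_one_of_le₀ (le_add_of_nonneg_right hj) (add_nonneg hx hj)⟩

theorem nonneg (hx : 0 ≤ x) (hd : ∀ j, 1 ≤ j → 0 ≤ d j) (n : ℕ) : 0 ≤ survivalProduct d x n :=
  prod_nonneg fun j hj => (factor_mem_Icc hx (hd j (mem_Icc.1 hj).1)).1

theorem antitone (hx : 0 ≤ x) (hd : ∀ j, 1 ≤ j → 0 ≤ d j) : Antitone (survivalProduct d x) := by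
  refine antitone_nat_of_succ_le fun n => ?_
  rw [succ]
  exact mul_le_of_le_one_right (nonneg hx hd n) (factor_mem_Icc hx (hd _ (Nat.le_add_left 1 n))).2

theorem le_pow {z : ℝ} (hx : 0 ≤ x) (hz : 0 < z) (hdz : ∀ j, 1 ≤ j → z ≤ d j) (n : ℕ) :
    survivalProduct d x n ≤ (x / (x + z)) ^ n := by
  have h : survivalProduct d x n ≤ ∏ _j ∈ Icc 1 n, x / (x + z) :=
    Finset.prod_le_prod (fun j hj => (factor_mem_Icc hx (hz.le.trans (hdz j (mem_Icc.1 hj).1))).1)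
      fun j hj => div_le_div_of_nonneg_left hx (by positivity)
        (add_le_add le_rfl (hdz j (mem_Icc.1 hj).1))
  rwa [prod_const, Nat.card_Icc, Nat.add_sub_cancel] at h

theorem tendsto_zero {z : ℝ} (hx : 0 ≤ x) (hz : 0 < z) (hdz : ∀ j, 1 ≤ j → z ≤ d j) :
    Tendsto (survivalProduct d x) atTop (𝓝 0) :=
  squeeze_zero (nonneg hx fun j hj => hz.le.trans (hdz j hj)) (le_pow hx hz hdz)
    (tendsto_pow_atTop_nhds_zero_of_lt_one (by positivity) ((div_lt_one (by linarith)).2 (by linarith)))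

theorem hasSum_mul_succ {z : ℝ} (hx : 0 ≤ x) (hz : 0 < z) (hdz : ∀ j, 1 ≤ j → z ≤ d j) :
    HasSum (fun n => d (n + 1) * survivalProduct d x (n + 1)) x := by
  have hd : ∀ j, 1 ≤ j → 0 ≤ d j := fun j hj => hz.le.trans (hdz j hj)
  have h := (hasSum_sub_succ_of_antitone (antitone hx hd) (tendsto_zero hx hz hdz)).mul_left x
  rw [zero, sub_zero, mul_one] at h
  exact h.congr_fun fun n =>
    mul_succ_eq_sub (add_pos_of_nonneg_of_pos hx (hz.trans_le (hdz _ (Nat.le_add_left 1 n)))).ne'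

end survivalProduct

theorem silicosis_series_sum_x'_general (d : ℕ → ℝ)
    (hz : 0 < ⨅ i : ℕ, d (i + 1)) (x : ℝ) (hx : 0 ≤ x) :
    HasSum (fun i : ℕ => d (i + 1) * ∏ j ∈ Finset.Icc 1 (i + 1), x / (x + d j)) x := by
  -- an unbounded-below family of reals has `iInf = 0`, so `hz` forces boundedness
  have hbdd : BddBelow (Set.range fun i => d (i + 1)) := by
    by_contra h
    rw [Real.iInf_of_not_bddBelow h] at hz
    exact hz.false
  have hdz : ∀ j, 1 ≤ j → (⨅ i : ℕ, d (i + 1)) ≤ d j := fun j hj => by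
    obtain ⟨i, rfl⟩ := Nat.exists_eq_add_of_le' hj
    exact ciInf_le hbdd i
  exact survivalProduct.hasSum_mul_succ hx hz hdz

/-- If `(d_i)_{i≥1}` are positive reals with positive infimum, then for every `x ≥ 0` the
series `∑_{i=1}^∞ d_i·∏_{j=1}^i x/(x+d_j)` converges with sum `x`. -/
theorem silicosis_series_sum_x' (d : ℕ → ℝ) (hd : ∀ i : ℕ, 1 ≤ i → 0 < d i)
    (hz : 0 < ⨅ i : ℕ, d (i + 1)) (x : ℝ) (hx : 0 ≤ x) :
    HasSum (fun i : ℕ => d (i + 1) * ∏ j ∈ Finset.Icc 1 (i + 1), x / (x + d j)) x :=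
  silicosis_series_sum_x'_general d hz x hx
end

section
/- Let (d_i)_{i≥1} and (ρ_i)_{i≥1} be sequences of positive reals with 0 < ρ_i ≤ d_i for all i ≥ 1 and inf_{i≥1} d_i > 0, let d_0 > 0, and define F(x) := (1/(x+d_0))·∑_{i=1}^∞ i·ρ_i·∏_{j=1}^i x/(x+d_j) for x ≥ 0. If there is a constant K > 0 such that i·ρ_i ≤ K·d_i for all i ≥ 1, then F(x) ≤ K for all x ≥ 0; moreover, setting m := sup_{x ≥ 0} F(x), one has m > 0, for every c with 0 < c < m there exists x > 0 with F(x) = c, and for every c > m there is no x ≥ 0 with F(x) = c. -/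
/-!
Write `P_n(x) = ∏_{j=1}^n x/(x+d_j)`. Since `d_{n+1} P_{n+1} = x (P_n - P_{n+1})`, the bound
`i ρ_i ≤ K d_i` makes the series telescope: its partial sums are at most `K x (1 - P_N) ≤ K x`,
whence `F ≤ K x / (x + d₀) ≤ K`. With `δ = inf d_i > 0`, on `[0, M]` every factor of `P_n` is at
most `M / (M + δ) < 1`, so the series is dominated by a geometric one and `F` is continuous.
As `F(0) = 0` and `F > 0` on `(0, ∞)`, the intermediate value theorem yields every value in
`(0, sup F)`.
-/

open Set

lemma continuousOn_Ici_of_forall_Icc {f : ℝ → ℝ} {a : ℝ}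
    (hf : ∀ b, a ≤ b → ContinuousOn f (Icc a b)) :
    ContinuousOn f (Ici a) :=
  continuousOn_of_locally_continuousOn fun x hx =>
    ⟨Iio (x + 1), isOpen_Iio, by simp, (hf (x + 1) (by linarith [mem_Ici.1 hx])).mono
      fun _ hy => ⟨hy.1, hy.2.le⟩⟩

lemma exists_pos_eq_of_lt_sSup_image_Ici {f : ℝ → ℝ} (hf : ContinuousOn f (Ici 0))
    (hf₀ : f 0 = 0) {c : ℝ} (hc : 0 < c) (hcm : c < sSup (f '' Ici 0)) :
    ∃ x, 0 < x ∧ f x = c := by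
  obtain ⟨_, ⟨b, hb, rfl⟩, hcb⟩ := exists_lt_of_lt_csSup (image_nonempty.2 nonempty_Ici) hcm
  obtain ⟨x, hx, rfl⟩ := intermediate_value_Icc (mem_Ici.1 hb) (hf.mono Icc_subset_Ici_self)
    ⟨by rw [hf₀]; exact hc.le, hcb.le⟩
  refine ⟨x, hx.1.lt_of_ne ?_, rfl⟩
  rintro rfl
  exact hc.ne' hf₀

lemma Real.iInf_le_of_pos {ι : Type*} {f : ι → ℝ} (h : 0 < ⨅ i, f i) (i : ι) : ⨅ i, f i ≤ f i :=
  ciInf_le (not_not.1 fun hf => h.ne' (Real.iInf_of_not_bddBelow hf)) i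

namespace Silicosis

noncomputable def ratioProd (d : ℕ → ℝ) (x : ℝ) (n : ℕ) : ℝ := ∏ j ∈ Finset.Icc 1 n, x / (x + d j)

-- `term d ρ x i` is the summand of index `i + 1` in the paper.
noncomputable def term (d ρ : ℕ → ℝ) (x : ℝ) (i : ℕ) : ℝ :=
  ((i + 1 : ℕ) : ℝ) * ρ (i + 1) * ratioProd d x (i + 1)

noncomputable def equilibriumFun (d ρ : ℕ → ℝ) (d₀ x : ℝ) : ℝ := 1 / (x + d₀) * ∑' i, term d ρ x i

variable {d ρ : ℕ → ℝ} {x K : ℝ}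

@[simp]
lemma ratioProd_zero : ratioProd d x 0 = 1 := by
  simp [ratioProd]

lemma ratioProd_succ (n : ℕ) :
    ratioProd d x (n + 1) = ratioProd d x n * (x / (x + d (n + 1))) :=
  Finset.prod_Icc_succ_top (Nat.le_add_left 1 n) _

lemma ratioProd_nonneg (hx : 0 ≤ x) (hd : ∀ j, 1 ≤ j → 0 < d j) (n : ℕ) :
    0 ≤ ratioProd d x n :=
  Finset.prod_nonneg fun j hj => div_nonneg hx (by linarith [hd j (Finset.mem_Icc.1 hj).1])

lemma mul_ratioProd_succ {n : ℕ} (h : x + d (n + 1) ≠ 0) :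
    d (n + 1) * ratioProd d x (n + 1) = x * (ratioProd d x n - ratioProd d x (n + 1)) := by
  rw [ratioProd_succ]
  field_simp
  ring

lemma div_add_le_div_add {δ M e : ℝ} (hx : 0 ≤ x) (hxM : x ≤ M) (hδ : 0 < δ) (hδe : δ ≤ e) :
    x / (x + e) ≤ M / (M + δ) := by
  rw [div_le_div_iff₀ (by linarith) (by linarith)]
  nlinarith

lemma ratioProd_le_pow {δ M : ℝ} (hx : 0 ≤ x) (hxM : x ≤ M) (hδ : 0 < δ)
    (hδd : ∀ j, 1 ≤ j → δ ≤ d j) (n : ℕ) : ratioProd d x n ≤ (M / (M + δ)) ^ n := by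
  induction n with
  | zero => simp
  | succ n ih =>
    rw [ratioProd_succ, pow_succ]
    exact mul_le_mul ih (div_add_le_div_add hx hxM hδ (hδd _ n.succ_pos))
      (div_nonneg hx (by linarith [hδd _ n.succ_pos])) (by positivity [hx.trans hxM])

lemma continuousOn_ratioProd (hd : ∀ j, 1 ≤ j → 0 < d j) (n : ℕ) :
    ContinuousOn (fun x => ratioProd d x n) (Ici 0) :=
  continuousOn_finsetProd _ fun j hj =>
    continuousOn_id.div (continuousOn_id.add continuousOn_const) fun _ hx =>
      (add_pos_of_nonneg_of_pos hx (hd j (Finset.mem_Icc.1 hj).1)).ne'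

lemma term_nonneg (hx : 0 ≤ x) (hd : ∀ j, 1 ≤ j → 0 < d j) (hρ : ∀ i, 1 ≤ i → 0 ≤ ρ i)
    (i : ℕ) : 0 ≤ term d ρ x i :=
  mul_nonneg (mul_nonneg (Nat.cast_nonneg _) (hρ _ i.succ_pos)) (ratioProd_nonneg hx hd _)

lemma term_le (hx : 0 ≤ x) (hd : ∀ j, 1 ≤ j → 0 < d j)
    (h : ∀ i : ℕ, 1 ≤ i → (i : ℝ) * ρ i ≤ K * d i) (i : ℕ) :
    term d ρ x i ≤ K * (x * (ratioProd d x i - ratioProd d x (i + 1))) := by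
  have hx_add : x + d (i + 1) ≠ 0 := (add_pos_of_nonneg_of_pos hx (hd _ i.succ_pos)).ne'
  calc term d ρ x i ≤ K * d (i + 1) * ratioProd d x (i + 1) :=
        mul_le_mul_of_nonneg_right (h _ i.succ_pos) (ratioProd_nonneg hx hd _)
    _ = K * (x * (ratioProd d x i - ratioProd d x (i + 1))) := by
        rw [mul_assoc, mul_ratioProd_succ hx_add]

lemma sum_range_term_le (hx : 0 ≤ x) (hd : ∀ j, 1 ≤ j → 0 < d j) (hK : 0 ≤ K)
    (h : ∀ i : ℕ, 1 ≤ i → (i : ℝ) * ρ i ≤ K * d i) (N : ℕ) :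
    ∑ i ∈ Finset.range N, term d ρ x i ≤ K * x := by
  calc ∑ i ∈ Finset.range N, term d ρ x i
      ≤ ∑ i ∈ Finset.range N, K * (x * (ratioProd d x i - ratioProd d x (i + 1))) :=
        Finset.sum_le_sum fun i _ => term_le hx hd h i
    _ = K * x * (1 - ratioProd d x N) := by
        rw [← ratioProd_zero (d := d) (x := x), ← Finset.sum_range_sub', Finset.mul_sum]
        simp only [mul_assoc]
    _ ≤ K * x :=
        mul_le_of_le_one_right (mul_nonneg hK hx) (by linarith [ratioProd_nonneg hx hd N])

lemma equilibriumFun_le {d₀ : ℝ} (hx : 0 ≤ x) (hd : ∀ j, 1 ≤ j → 0 < d j) (hd₀ : 0 < d₀)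
    (hρ : ∀ i, 1 ≤ i → 0 ≤ ρ i) (hK : 0 ≤ K) (h : ∀ i : ℕ, 1 ≤ i → (i : ℝ) * ρ i ≤ K * d i) :
    equilibriumFun d ρ d₀ x ≤ K := by
  have hsum : ∑' i, term d ρ x i ≤ K * x :=
    Real.tsum_le_of_sum_range_le (term_nonneg hx hd hρ) (sum_range_term_le hx hd hK h)
  rw [equilibriumFun, one_div, inv_mul_le_iff₀ (by linarith)]
  nlinarith

lemma equilibriumFun_zero (d ρ : ℕ → ℝ) (d₀ : ℝ) : equilibriumFun d ρ d₀ 0 = 0 := by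
  simp [equilibriumFun, term, ratioProd_succ]

lemma equilibriumFun_pos {d₀ : ℝ} (hx : 0 < x) (hd : ∀ j, 1 ≤ j → 0 < d j) (hd₀ : 0 < d₀)
    (hρ : ∀ i, 1 ≤ i → 0 < ρ i) (hK : 0 ≤ K) (h : ∀ i : ℕ, 1 ≤ i → (i : ℝ) * ρ i ≤ K * d i) :
    0 < equilibriumFun d ρ d₀ x := by
  have hnonneg := term_nonneg hx.le hd fun i hi => (hρ i hi).le
  have hterm₀ : 0 < term d ρ x 0 := by
    have := hd 1 le_rfl
    have := hρ 1 le_rfl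
    simp only [term, ratioProd_succ, ratioProd_zero]
    positivity
  have hsummable := summable_of_sum_range_le hnonneg (sum_range_term_le hx.le hd hK h)
  have hsum : 0 < ∑' i, term d ρ x i := hsummable.tsum_pos hnonneg 0 hterm₀
  exact mul_pos (by positivity) hsum

lemma continuousOn_equilibriumFun_Icc {δ d₀ M : ℝ} (hδ : 0 < δ) (hδd : ∀ j, 1 ≤ j → δ ≤ d j)
    (hd₀ : 0 < d₀) (hρ : ∀ i, 1 ≤ i → 0 ≤ ρ i) (hK : 0 ≤ K)
    (h : ∀ i : ℕ, 1 ≤ i → (i : ℝ) * ρ i ≤ K * d i) (hM : 0 ≤ M) :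
    ContinuousOn (equilibriumFun d ρ d₀) (Icc 0 M) := by
  have hd : ∀ j, 1 ≤ j → 0 < d j := fun j hj => hδ.trans_le (hδd j hj)
  have hr : M / (M + δ) < 1 := (div_lt_one (by positivity)).2 (by linarith)
  have hcont : ∀ i, ContinuousOn (fun x => term d ρ x i) (Icc 0 M) := fun i =>
    continuousOn_const.mul ((continuousOn_ratioProd hd _).mono Icc_subset_Ici_self)
  have hbound : ∀ i, ∀ x ∈ Icc 0 M, ‖term d ρ x i‖ ≤ K * M * (M / (M + δ)) ^ i := by
    intro i x ⟨hx, hxM⟩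
    rw [Real.norm_of_nonneg (term_nonneg hx hd hρ i)]
    have hP := ratioProd_nonneg hx hd (i + 1)
    calc term d ρ x i ≤ K * (x * (ratioProd d x i - ratioProd d x (i + 1))) := term_le hx hd h i
      _ ≤ K * (x * ratioProd d x i) := by gcongr; linarith
      _ ≤ K * (M * (M / (M + δ)) ^ i) := by
          gcongr
          exacts [ratioProd_nonneg hx hd i, ratioProd_le_pow hx hxM hδ hδd i]
      _ = K * M * (M / (M + δ)) ^ i := by ring
  have hsum : ContinuousOn (fun x => ∑' i, term d ρ x i) (Icc 0 M) :=
    continuousOn_tsum hcont ((summable_geometric_of_lt_one (by positivity) hr).mul_left _) hbound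
  refine ContinuousOn.mul ?_ hsum
  exact continuousOn_const.div (continuousOn_id.add continuousOn_const) fun x hx =>
    (add_pos_of_nonneg_of_pos hx.1 hd₀).ne'

end Silicosis

open Silicosis in
theorem silicosis_equilibrium_bounded_case_general (d ρ : ℕ → ℝ)
    (hρ : ∀ i : ℕ, 1 ≤ i → 0 < ρ i)
    (hz : 0 < ⨅ i : ℕ, d (i + 1)) (d₀ : ℝ) (hd₀ : 0 < d₀)
    (F : ℝ → ℝ)
    (hF : ∀ x : ℝ, F x = (1 / (x + d₀)) *
      ∑' i : ℕ, ((i + 1 : ℕ) : ℝ) * ρ (i + 1) * ∏ j ∈ Finset.Icc 1 (i + 1), x / (x + d j))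
    (K : ℝ) (hK : 0 < K) (h : ∀ i : ℕ, 1 ≤ i → (i : ℝ) * ρ i ≤ K * d i) :
    (∀ x : ℝ, 0 ≤ x → F x ≤ K) ∧
      0 < sSup (F '' Set.Ici 0) ∧
      (∀ c : ℝ, 0 < c → c < sSup (F '' Set.Ici 0) → ∃ x : ℝ, 0 < x ∧ F x = c) ∧
      (∀ c : ℝ, sSup (F '' Set.Ici 0) < c → ¬ ∃ x : ℝ, 0 ≤ x ∧ F x = c) := by
  obtain rfl : F = equilibriumFun d ρ d₀ := funext hF
  have hδd : ∀ j, 1 ≤ j → ⨅ i, d (i + 1) ≤ d j := fun j hj => by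
    obtain ⟨i, rfl⟩ := Nat.exists_eq_add_of_le' hj
    exact Real.iInf_le_of_pos hz i
  have hd : ∀ j, 1 ≤ j → 0 < d j := fun j hj => hz.trans_le (hδd j hj)
  have hρ' : ∀ i, 1 ≤ i → 0 ≤ ρ i := fun i hi => (hρ i hi).le
  have hle : ∀ x, 0 ≤ x → equilibriumFun d ρ d₀ x ≤ K := fun x hx =>
    equilibriumFun_le hx hd hd₀ hρ' hK.le h
  have hbdd : BddAbove (equilibriumFun d ρ d₀ '' Ici 0) := ⟨K, forall_mem_image.2 hle⟩
  have hcont : ContinuousOn (equilibriumFun d ρ d₀) (Ici 0) :=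
    continuousOn_Ici_of_forall_Icc fun _ hM =>
      continuousOn_equilibriumFun_Icc hz hδd hd₀ hρ' hK.le h hM
  refine ⟨hle, ?_, fun c hc hcm => exists_pos_eq_of_lt_sSup_image_Ici hcont
    (equilibriumFun_zero d ρ d₀) hc hcm, ?_⟩
  · exact (equilibriumFun_pos one_pos hd hd₀ hρ hK.le h).trans_le
      (le_csSup hbdd ⟨1, mem_Ici.2 zero_le_one, rfl⟩)
  · rintro c hmc ⟨x, hx, rfl⟩
    exact hmc.not_ge (le_csSup hbdd ⟨x, hx, rfl⟩)

/-- If `i·ρ_i ≤ K·d_i` for all `i ≥ 1`, then the silicosis equilibrium function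
`F(x) = (1/(x+d₀))·∑_{i=1}^∞ i·ρ_i·∏_{j=1}^i x/(x+d_j)` is bounded by `K`; moreover,
with `m = sup_{x ≥ 0} F(x)` one has `m > 0`, every `c` with `0 < c < m` is attained at
some `x > 0`, and no `c > m` is attained at any `x ≥ 0`. -/
theorem silicosis_equilibrium_bounded_case (d ρ : ℕ → ℝ)
    (hρ : ∀ i : ℕ, 1 ≤ i → 0 < ρ i) (hρd : ∀ i : ℕ, 1 ≤ i → ρ i ≤ d i)
    (hz : 0 < ⨅ i : ℕ, d (i + 1)) (d₀ : ℝ) (hd₀ : 0 < d₀)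
    (F : ℝ → ℝ)
    (hF : ∀ x : ℝ, F x = (1 / (x + d₀)) *
      ∑' i : ℕ, ((i + 1 : ℕ) : ℝ) * ρ (i + 1) * ∏ j ∈ Finset.Icc 1 (i + 1), x / (x + d j))
    (K : ℝ) (hK : 0 < K) (h : ∀ i : ℕ, 1 ≤ i → (i : ℝ) * ρ i ≤ K * d i) :
    (∀ x : ℝ, 0 ≤ x → F x ≤ K) ∧
      0 < sSup (F '' Set.Ici 0) ∧
      (∀ c : ℝ, 0 < c → c < sSup (F '' Set.Ici 0) → ∃ x : ℝ, 0 < x ∧ F x = c) ∧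
      (∀ c : ℝ, sSup (F '' Set.Ici 0) < c → ¬ ∃ x : ℝ, 0 ≤ x ∧ F x = c) :=
  silicosis_equilibrium_bounded_case_general d ρ hρ hz d₀ hd₀ F hF K hK h
end

section
/- For every real x > 0, the series ∑_{i=1}^∞ i·∏_{j=1}^i x/(x+j+1) converges and its sum equals x − e^x·x^{−x−1}·∫_0^x e^{−t}·t^{x+1} dt. -/
/-!
Write `P n = ∏_{j ≤ n} x / (x + j + 1)`. Since `(x + n + 1) P n = x P (n - 1)`, the terms satisfy
`n P n = x P (n - 1) - (x + 1) P n`, so the series equals `x - ∑_{n ≥ 1} P n`.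
Integration by parts gives, for `R s = e^x x^(-s) ∫_0^x e^(-t) t^s dt`, the recurrence
`R (s + 1) = (s + 1) / x * R s - 1`, whence `P (n + 1) = P n R (x + 1 + n) - P (n + 1) R (x + 2 + n)`.
As `R` is bounded and `P n → 0` geometrically, this telescopes to `∑_{n ≥ 1} P n = R (x + 1)`.
-/

open Real Filter Topology

theorem hasSum_of_eq_sub_succ {a u : ℕ → ℝ} {l : ℝ} (ha : ∀ n, 0 ≤ a n)
    (hau : ∀ n, a n = u n - u (n + 1)) (hu : Tendsto u atTop (𝓝 l)) :
    HasSum a (u 0 - l) := by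
  rw [hasSum_iff_tendsto_nat_of_nonneg ha]
  simp_rw [hau, Finset.sum_range_sub']
  exact hu.const_sub _

theorem integral_exp_neg_mul_rpow_add_one (x : ℝ) {s : ℝ} (hs : 0 ≤ s) :
    ∫ t in (0 : ℝ)..x, exp (-t) * t ^ (s + 1) =
      (s + 1) * (∫ t in (0 : ℝ)..x, exp (-t) * t ^ s) - exp (-x) * x ^ (s + 1) := by
  have hparts := intervalIntegral.integral_mul_deriv_eq_deriv_mul (a := 0) (b := x)
    (u := fun t => exp (-t)) (u' := fun t => -exp (-t))
    (v := fun t => t ^ (s + 1)) (v' := fun t => (s + 1) * t ^ s)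
    (fun t _ => by simpa using (hasDerivAt_neg t).exp)
    (fun t _ => by simpa using hasDerivAt_rpow_const (x := t) (p := s + 1) (by right; linarith))
    (by apply Continuous.intervalIntegrable; fun_prop)
    (by
      apply Continuous.intervalIntegrable
      exact continuous_const.mul (continuous_id.rpow_const fun _ => Or.inr hs))
  simp only [neg_mul, intervalIntegral.integral_neg, sub_neg_eq_add, mul_left_comm _ (s + 1),
    intervalIntegral.integral_const_mul, neg_zero, exp_zero, one_mul] at hparts
  rw [zero_rpow (by linarith)] at hparts
  linarith

/-- `e^x x^(-s) γ(s + 1, x)`, where `γ` is the lower incomplete Gamma function. -/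
noncomputable def scaledLowerGamma (x s : ℝ) : ℝ :=
  exp x * x ^ (-s) * ∫ t in (0 : ℝ)..x, exp (-t) * t ^ s

theorem scaledLowerGamma_add_one {x s : ℝ} (hx : 0 < x) (hs : 0 ≤ s) :
    scaledLowerGamma x (s + 1) = (s + 1) / x * scaledLowerGamma x s - 1 := by
  have hpow : x ^ (-(s + 1)) = x ^ (-s) / x := by
    rw [neg_add', rpow_sub_one hx.ne']
  have hcancel : x ^ (-s) * x ^ (s + 1) = x := by
    rw [← rpow_add hx, neg_add_cancel_left, rpow_one]
  have hexp : exp x * exp (-x) = 1 := by rw [← exp_add, add_neg_cancel, exp_zero]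
  rw [scaledLowerGamma, scaledLowerGamma, integral_exp_neg_mul_rpow_add_one x hs, hpow]
  field_simp
  linear_combination (-exp x * exp (-x)) * hcancel - x * hexp

theorem abs_scaledLowerGamma_le {x : ℝ} (hx : 0 < x) {s : ℝ} (hs : 0 ≤ s) :
    |scaledLowerGamma x s| ≤ exp x * x := by
  have hint : |∫ t in (0 : ℝ)..x, exp (-t) * t ^ s| ≤ x ^ s * x := by
    simpa [abs_of_pos hx] using intervalIntegral.norm_integral_le_of_norm_le_const
      (a := 0) (b := x) (C := x ^ s) (f := fun t => exp (-t) * t ^ s) fun t ht => by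
        rw [Set.uIoc_of_le hx.le] at ht
        have ht0 : 0 ≤ t := ht.1.le
        rw [norm_mul, norm_of_nonneg (exp_pos _).le, norm_of_nonneg (rpow_nonneg ht0 s)]
        calc exp (-t) * t ^ s ≤ 1 * x ^ s := by
              gcongr
              · exact exp_le_one_iff.mpr (by linarith)
              · exact ht.2
          _ = x ^ s := one_mul _
  have hcancel : x ^ (-s) * x ^ s = 1 := by rw [← rpow_add hx, neg_add_cancel, rpow_zero]
  calc |scaledLowerGamma x s| = exp x * x ^ (-s) * |∫ t in (0 : ℝ)..x, exp (-t) * t ^ s| := by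
        rw [scaledLowerGamma, abs_mul, abs_of_pos (by positivity)]
    _ ≤ exp x * x ^ (-s) * (x ^ s * x) := by gcongr
    _ = exp x * x := by rw [← mul_assoc, mul_assoc (exp x), hcancel, mul_one]

noncomputable def silicosisProd (x : ℝ) (n : ℕ) : ℝ :=
  ∏ j ∈ Finset.Icc 1 n, x / (x + j + 1)

theorem silicosisProd_zero (x : ℝ) : silicosisProd x 0 = 1 := by
  simp [silicosisProd]

theorem silicosisProd_succ (x : ℝ) (n : ℕ) :
    silicosisProd x (n + 1) = silicosisProd x n * (x / (x + n + 2)) := by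
  rw [silicosisProd, silicosisProd, Finset.prod_Icc_succ_top (Nat.le_add_left 1 n)]
  push_cast
  ring

theorem silicosisProd_nonneg {x : ℝ} (hx : 0 ≤ x) (n : ℕ) : 0 ≤ silicosisProd x n :=
  Finset.prod_nonneg fun j _ => by positivity

theorem silicosisProd_le_pow {x : ℝ} (hx : 0 ≤ x) (n : ℕ) :
    silicosisProd x n ≤ (x / (x + 2)) ^ n := by
  calc silicosisProd x n ≤ ∏ _j ∈ Finset.Icc 1 n, x / (x + 2) := by
        refine Finset.prod_le_prod (fun j _ => by positivity) fun j hj => ?_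
        have hj1 : (1 : ℝ) ≤ j := by exact_mod_cast (Finset.mem_Icc.mp hj).1
        exact div_le_div_of_nonneg_left hx (by positivity) (by linarith)
    _ = (x / (x + 2)) ^ n := by simp [div_pow]

theorem tendsto_silicosisProd_atTop {x : ℝ} (hx : 0 ≤ x) :
    Tendsto (silicosisProd x) atTop (𝓝 0) :=
  squeeze_zero (silicosisProd_nonneg hx) (silicosisProd_le_pow hx) <|
    tendsto_pow_atTop_nhds_zero_of_lt_one (by positivity) <|
      (div_lt_one (by linarith)).mpr (by linarith)

theorem succ_mul_silicosisProd_succ {x : ℝ} (hx : 0 ≤ x) (n : ℕ) :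
    ((n + 1 : ℕ) : ℝ) * silicosisProd x (n + 1) =
      x * silicosisProd x n - (x + 1) * silicosisProd x (n + 1) := by
  rw [silicosisProd_succ]
  push_cast
  field_simp
  ring

theorem silicosisProd_succ_eq_sub {x : ℝ} (hx : 0 < x) (n : ℕ) :
    silicosisProd x (n + 1) =
      silicosisProd x n * scaledLowerGamma x (x + 1 + n) -
        silicosisProd x (n + 1) * scaledLowerGamma x (x + 1 + (n + 1 : ℕ)) := by
  have hs : (0 : ℝ) ≤ x + 1 + n := by positivity
  rw [show x + 1 + ((n + 1 : ℕ) : ℝ) = x + 1 + n + 1 by push_cast; ring,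
    scaledLowerGamma_add_one hx hs, silicosisProd_succ]
  field_simp
  ring

theorem hasSum_silicosisProd_succ {x : ℝ} (hx : 0 < x) :
    HasSum (fun n => silicosisProd x (n + 1)) (scaledLowerGamma x (x + 1)) := by
  have hbound : ∀ n : ℕ, ‖silicosisProd x n * scaledLowerGamma x (x + 1 + n)‖ ≤
      silicosisProd x n * (exp x * x) := fun n => by
    rw [norm_mul, norm_of_nonneg (silicosisProd_nonneg hx.le n)]
    exact mul_le_mul_of_nonneg_left (abs_scaledLowerGamma_le hx (by positivity))
      (silicosisProd_nonneg hx.le n)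
  have hlim : Tendsto (fun n : ℕ => silicosisProd x n * scaledLowerGamma x (x + 1 + n))
      atTop (𝓝 0) := by
    refine squeeze_zero_norm hbound ?_
    simpa using (tendsto_silicosisProd_atTop hx.le).mul_const (exp x * x)
  simpa [silicosisProd_zero] using hasSum_of_eq_sub_succ
    (fun n => silicosisProd_nonneg hx.le (n + 1)) (silicosisProd_succ_eq_sub hx) hlim

/-- For every `x > 0`, the series `∑_{i=1}^∞ i·∏_{j=1}^i x/(x+j+1)` converges and its
sum equals `x − e^x·x^(−x−1)·∫_0^x e^(−t)·t^(x+1) dt`. -/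
theorem silicosis_H_one_zero_closed_form (x : ℝ) (hx : 0 < x) :
    HasSum (fun i : ℕ =>
        ((i + 1 : ℕ) : ℝ) * ∏ j ∈ Finset.Icc 1 (i + 1), x / (x + (j : ℝ) + 1))
      (x - Real.exp x * x ^ (-x - 1) *
        ∫ t in (0 : ℝ)..x, Real.exp (-t) * t ^ (x + 1)) := by
  have htail := hasSum_silicosisProd_succ hx
  have hfull : HasSum (silicosisProd x) (scaledLowerGamma x (x + 1) + 1) := by
    simpa [silicosisProd_zero] using (hasSum_nat_add_iff 1).mp htail
  have hvalue : x - exp x * x ^ (-x - 1) * ∫ t in (0 : ℝ)..x, exp (-t) * t ^ (x + 1) =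
      x * (scaledLowerGamma x (x + 1) + 1) - (x + 1) * scaledLowerGamma x (x + 1) := by
    rw [scaledLowerGamma, neg_add']
    ring
  rw [hvalue]
  exact ((hfull.mul_left x).sub (htail.mul_left (x + 1))).congr_fun
    (succ_mul_silicosisProd_succ hx.le)
end
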